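/- arXiv:1908.02921 — 4 statements merged into one kernel-verified Lean document; each statement's English description precedes it below -/
import Mathlib

section
/- Let θ : ℝ → ℝ satisfy the Riccati inequality θ'(s) ≤ -θ(s)²/2 on its domain, with θ(s₀) = θ₀ < 0. Then θ cannot be extended as a (finite-valued) solution beyond s₀ + 2/|θ₀|; i.e., θ(s) → -∞ at some s₁ with s₀ < s₁ ≤ s₀ + 2/|θ₀|. -/
open Set

/-- Focusing lemma: a solution of the Riccati inequality `θ' ≤ -θ²/2` with
negative initial value `θ₀ = θ s₀ < 0` cannot exist (finite-valued) on the whole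
closed interval `[s₀, s₀ + 2/|θ₀|]`; i.e. `θ` diverges to `-∞` at some
`s₁` with `s₀ < s₁ ≤ s₀ + 2/|θ₀|`. -/
theorem stmt_0 (θ θ' : ℝ → ℝ) (s₀ θ₀ : ℝ) (hθ₀ : θ₀ < 0) (hinit : θ s₀ = θ₀)
    (hderiv : ∀ s ∈ Icc s₀ (s₀ + 2 / |θ₀|),
      HasDerivWithinAt θ (θ' s) (Icc s₀ (s₀ + 2 / |θ₀|)) s)
    (hineq : ∀ s ∈ Icc s₀ (s₀ + 2 / |θ₀|), θ' s ≤ -(θ s) ^ 2 / 2) :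
    False := by
  set T : ℝ := s₀ + 2 / |θ₀| with hT
  set I : Set ℝ := Icc s₀ T with hI
  have habs : 0 < |θ₀| := abs_pos.mpr (ne_of_lt hθ₀)
  have hlen : 0 < 2 / |θ₀| := by positivity
  have hs₀T : s₀ ≤ T := by rw [hT]; linarith
  have hs₀I : s₀ ∈ I := ⟨le_refl _, hs₀T⟩
  have hTI : T ∈ I := ⟨hs₀T, le_refl _⟩
  have hconv : Convex ℝ I := convex_Icc _ _
  have hcont : ContinuousOn θ I := fun s hs => (hderiv s hs).continuousWithinAt
  -- θ is antitone on I
  have hanti : AntitoneOn θ I := by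
    apply antitoneOn_of_hasDerivWithinAt_nonpos hconv hcont
      (f' := θ') (fun x hx => ((hderiv x (interior_subset hx)).mono interior_subset))
    intro x hx
    have hx' : x ∈ I := interior_subset hx
    have := hineq x hx'
    nlinarith [sq_nonneg (θ x)]
  -- θ s ≤ θ₀ < 0 on I
  have hneg : ∀ s ∈ I, θ s < 0 := by
    intro s hs
    have := hanti hs₀I hs hs.1
    rw [hinit] at this
    linarith
  -- g = -(θ)⁻¹ + s/2 is antitone on I
  have hg : AntitoneOn (fun s => -(θ s)⁻¹ + s / 2) I := by
    apply antitoneOn_of_hasDerivWithinAt_nonpos hconv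
      (f' := fun s => θ' s / (θ s) ^ 2 + 1 / 2)
    · apply ContinuousOn.add _ (continuousOn_id.div_const 2)
      exact (hcont.inv₀ (fun s hs => ne_of_lt (hneg s hs))).neg
    · intro x hx
      have hx' : x ∈ I := interior_subset hx
      have h1 : HasDerivWithinAt (fun s => (θ s)⁻¹) (-θ' x / (θ x) ^ 2) I x :=
        (hderiv x hx').inv (ne_of_lt (hneg x hx'))
      have h2 : HasDerivWithinAt (fun s => -(θ s)⁻¹ + s / 2)
          (-(-θ' x / (θ x) ^ 2) + 1 / 2) I x := by
        exact h1.neg.add ((hasDerivWithinAt_id x I).div_const 2)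
      have : -(-θ' x / (θ x) ^ 2) + 1 / 2 = θ' x / (θ x) ^ 2 + 1 / 2 := by ring
      rw [this] at h2
      exact h2.mono interior_subset
    · intro x hx
      have hx' : x ∈ I := interior_subset hx
      have hθx := hneg x hx'
      have hne : θ x ≠ 0 := ne_of_lt hθx
      have hsq : 0 < (θ x) ^ 2 := by positivity
      have := hineq x hx'
      rw [div_add' _ _ _ (ne_of_gt hsq) ]
      apply div_nonpos_of_nonpos_of_nonneg _ (le_of_lt hsq)
      nlinarith
  have key := hg hs₀I hTI hs₀T
  simp only [hinit] at key
  have hθT : θ T < 0 := hneg T hTI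
  have hinvT : 0 < -(θ T)⁻¹ := by
    simp only [Left.nonneg_neg_iff, neg_pos]
    exact inv_neg''.mpr hθT
  have habs' : |θ₀| = -θ₀ := abs_of_neg hθ₀
  have hθ₀inv : -θ₀⁻¹ = 1 / |θ₀| := by
    rw [habs']; field_simp
  have h2 : 2 / |θ₀| / 2 = 1 / |θ₀| := by ring
  -- key : -(θ T)⁻¹ + T/2 ≤ -θ₀⁻¹ + s₀/2
  have : -(θ T)⁻¹ ≤ -θ₀⁻¹ - (T - s₀) / 2 := by linarith
  rw [hθ₀inv, hT] at this
  have : -(θ T)⁻¹ ≤ 0 := by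
    rw [show s₀ + 2 / |θ₀| - s₀ = 2 / |θ₀| by ring, h2] at this
    linarith
  linarith
end

section
/- Let θ₀(s) = Θ/(s - s₀) and Σ₀(s) = Σ/(s - s₀) (with Θ, Σ the algebraic background constants, s > s₀) and consider the linearized inhomogeneous system θ₁' = -(Θ/(s-s₀))θ₁ - (2Σ/(s-s₀))σ₁, σ₁' = -(Σ/(s-s₀))θ₁ - (Θ/(s-s₀))σ₁ + C(s), where |C(s)| ≤ C₀ for all s. Then any solution with θ₁(s₀+1) = σ₁(s₀+1) = 0 satisfies |θ₁(s)| + |σ₁(s)| ≤ K C₀ (s - s₀) for s ≥ s₀ + 1, for a constant K depending only on Θ, Σ. -/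
open Set

/-!
The background equations force `(Θ, Sg)` to be `(0, 0)`, `(2, 0)` or `(1, ±1/√2)`. In each case
the linearized system diagonalizes: for `Sg = 0` it is already decoupled, and for `Θ = 1` the
combinations `u = θ₁ + 2 Sg σ₁`, `v = θ₁ - 2 Sg σ₁` satisfy `u' = -(2/(s-s₀)) u + 2 Sg C` and
`v' = -2 Sg C`. A scalar equation `f' = -(k/(s-s₀)) f + D` has the integrating factor `(s-s₀)^k`,
and the mean value inequality applied to `(s-s₀)^k f` gives `|f s| ≤ sup |D| · (s - a)` for data
`f a = 0`.
-/

theorem powerLaw_background_cases {Θ Sg : ℝ} (h : -Θ = -Θ ^ 2 / 2 - Sg ^ 2 ∧ -Sg = -Θ * Sg) :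
    (Θ = 0 ∧ Sg = 0) ∨ (Θ = 2 ∧ Sg = 0) ∨ (Θ = 1 ∧ Sg ^ 2 = 1 / 2) := by
  obtain ⟨h₁, h₂⟩ := h
  rcases mul_eq_zero.1 (by linear_combination h₂ : Sg * (Θ - 1) = 0) with hSg | hΘ
  · subst hSg
    rcases mul_eq_zero.1 (by linear_combination 2 * h₁ : Θ * (Θ - 2) = 0) with hΘ | hΘ
    · exact Or.inl ⟨hΘ, rfl⟩
    · exact Or.inr (Or.inl ⟨by linarith, rfl⟩)
  · have hΘ : Θ = 1 := by linarith
    subst hΘ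
    exact Or.inr (Or.inr ⟨rfl, by linear_combination h₁⟩)

theorem abs_add_abs_le_of_half_le_abs {c : ℝ} (hc : 1 / 2 ≤ |c|) (x y : ℝ) :
    |x| + |y| ≤ |x + 2 * c * y| + |x - 2 * c * y| := by
  have hx := abs_add_le (x + 2 * c * y) (x - 2 * c * y)
  have hy := abs_sub (x + 2 * c * y) (x - 2 * c * y)
  rw [show x + 2 * c * y + (x - 2 * c * y) = 2 * x by ring, abs_mul, abs_two] at hx
  rw [show x + 2 * c * y - (x - 2 * c * y) = 4 * c * y by ring, abs_mul, abs_mul,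
    abs_of_pos four_pos] at hy
  nlinarith [mul_le_mul_of_nonneg_right hc (abs_nonneg y)]

section LinearizedSystem

variable {s₀ a : ℝ}

theorem abs_le_mul_sub_of_hasDerivAt_eq_neg_div_mul_add (k : ℕ) (hsa : s₀ < a)
    {f D : ℝ → ℝ} {D₀ : ℝ} (hD : ∀ t ∈ Ici a, |D t| ≤ D₀)
    (hf : ∀ t ∈ Ici a, HasDerivAt f (-(k / (t - s₀)) * f t + D t) t) (hf₀ : f a = 0)
    {s : ℝ} (hs : a ≤ s) : |f s| ≤ D₀ * (s - a) := by
  have hw : ∀ t ∈ Icc a s, HasDerivWithinAt (fun t => (t - s₀) ^ k * f t)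
      ((t - s₀) ^ k * D t) (Icc a s) t := by
    intro t ht
    have hts : t - s₀ ≠ 0 := by linarith [ht.1]
    have hpow : HasDerivAt (fun t => (t - s₀) ^ k) (k * (t - s₀) ^ (k - 1)) t := by
      simpa using ((hasDerivAt_id t).sub_const s₀).fun_pow k
    refine ((hpow.mul (hf t ht.1)).congr_deriv ?_).hasDerivWithinAt
    rcases k with _ | m
    · simp
    · rw [Nat.add_sub_cancel]
      field_simp
      ring
  have hw' : ∀ t ∈ Icc a s, ‖(t - s₀) ^ k * D t‖ ≤ (s - s₀) ^ k * D₀ := by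
    intro t ht
    rw [norm_mul, norm_pow, Real.norm_eq_abs, abs_of_pos (by linarith [ht.1] : 0 < t - s₀)]
    exact mul_le_mul (pow_le_pow_left₀ (by linarith [ht.1]) (by linarith [ht.2]) k)
      (hD t ht.1) (abs_nonneg _) (pow_nonneg (by linarith [ht.1, ht.2]) k)
  have hmvt := Convex.norm_image_sub_le_of_norm_hasDerivWithin_le hw hw' (convex_Icc a s)
    (left_mem_Icc.2 hs) (right_mem_Icc.2 hs)
  have hpos : 0 < (s - s₀) ^ k := pow_pos (by linarith) k
  simp only [hf₀, mul_zero, sub_zero, norm_mul, norm_pow, Real.norm_eq_abs,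
    abs_of_pos (by linarith : 0 < s - s₀), abs_of_nonneg (sub_nonneg.2 hs)] at hmvt
  exact le_of_mul_le_mul_left (by linarith) hpos

variable {Θ Sg : ℝ} {θ₁ σ₁ C : ℝ → ℝ} {C₀ : ℝ}

theorem abs_add_abs_le_of_shear_eq_zero (k : ℕ) (hΘ : Θ = k) (hSg : Sg = 0) (hsa : s₀ < a)
    (hC : ∀ t ∈ Ici a, |C t| ≤ C₀)
    (hθ : ∀ t ∈ Ici a, HasDerivAt θ₁
      (-(Θ / (t - s₀)) * θ₁ t - 2 * Sg / (t - s₀) * σ₁ t) t)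
    (hσ : ∀ t ∈ Ici a, HasDerivAt σ₁
      (-(Sg / (t - s₀)) * θ₁ t - Θ / (t - s₀) * σ₁ t + C t) t)
    (hθ₀ : θ₁ a = 0) (hσ₀ : σ₁ a = 0) {s : ℝ} (hs : a ≤ s) :
    |θ₁ s| + |σ₁ s| ≤ C₀ * (s - a) := by
  subst hΘ hSg
  have hθs := abs_le_mul_sub_of_hasDerivAt_eq_neg_div_mul_add k hsa (D := 0) (D₀ := 0)
    (by simp) (fun t ht => (hθ t ht).congr_deriv (by simp)) hθ₀ hs
  have hσs := abs_le_mul_sub_of_hasDerivAt_eq_neg_div_mul_add k hsa hC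
    (fun t ht => (hσ t ht).congr_deriv (by ring)) hσ₀ hs
  linarith

theorem abs_add_abs_le_of_expansion_eq_one (hΘ : Θ = 1) (hSg : Sg ^ 2 = 1 / 2) (hsa : s₀ < a)
    (hC : ∀ t ∈ Ici a, |C t| ≤ C₀)
    (hθ : ∀ t ∈ Ici a, HasDerivAt θ₁
      (-(Θ / (t - s₀)) * θ₁ t - 2 * Sg / (t - s₀) * σ₁ t) t)
    (hσ : ∀ t ∈ Ici a, HasDerivAt σ₁
      (-(Sg / (t - s₀)) * θ₁ t - Θ / (t - s₀) * σ₁ t + C t) t)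
    (hθ₀ : θ₁ a = 0) (hσ₀ : σ₁ a = 0) {s : ℝ} (hs : a ≤ s) :
    |θ₁ s| + |σ₁ s| ≤ 4 * C₀ * (s - a) := by
  subst hΘ
  have hSg_abs : |Sg| ^ 2 = 1 / 2 := by rw [sq_abs, hSg]
  have hSg_le : |Sg| ≤ 1 := by nlinarith [abs_nonneg Sg]
  have hSg_ge : 1 / 2 ≤ |Sg| := by nlinarith [abs_nonneg Sg]
  have hSgC : ∀ t ∈ Ici a, |2 * Sg * C t| ≤ 2 * C₀ := fun t ht => by
    rw [abs_mul, abs_mul, abs_two]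
    nlinarith [abs_nonneg (C t), hC t ht]
  have hu := abs_le_mul_sub_of_hasDerivAt_eq_neg_div_mul_add 2 hsa hSgC
    (f := fun t => θ₁ t + 2 * Sg * σ₁ t)
    (fun t ht => ((hθ t ht).add ((hσ t ht).const_mul (2 * Sg))).congr_deriv
      (by push_cast; linear_combination (-(2 * θ₁ t) / (t - s₀)) * hSg))
    (by simp [hθ₀, hσ₀]) hs
  have hv := abs_le_mul_sub_of_hasDerivAt_eq_neg_div_mul_add 0 hsa
    (f := fun t => θ₁ t - 2 * Sg * σ₁ t)
    (fun t ht => (abs_neg (2 * Sg * C t)).trans_le (hSgC t ht))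
    (fun t ht => ((hθ t ht).sub ((hσ t ht).const_mul (2 * Sg))).congr_deriv
      (by push_cast; linear_combination (2 * θ₁ t / (t - s₀)) * hSg))
    (by simp [hθ₀, hσ₀]) hs
  linarith [abs_add_abs_le_of_half_le_abs hSg_ge (θ₁ s) (σ₁ s)]

end LinearizedSystem

/-- Linearized deviation system around the flat power-law background
`θ₀ = Θ/(s-s₀)`, `σ₀ = Sg/(s-s₀)` (with `Θ, Sg` the algebraic background
constants): any solution of
`θ₁' = -(Θ/(s-s₀))θ₁ - (2Sg/(s-s₀))σ₁`,
`σ₁' = -(Sg/(s-s₀))θ₁ - (Θ/(s-s₀))σ₁ + C(s)` with `|C| ≤ C₀` and zero data at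
`s₀+1` grows at most linearly: `|θ₁| + |σ₁| ≤ K·C₀·(s-s₀)`, with `K` depending
only on `Θ, Sg`. -/
theorem stmt_9 (Θ Sg s₀ : ℝ)
    (hbg : -Θ = -Θ ^ 2 / 2 - Sg ^ 2 ∧ -Sg = -Θ * Sg) :
    ∃ K : ℝ, 0 < K ∧ ∀ (θ₁ σ₁ C : ℝ → ℝ) (C₀ : ℝ),
      (∀ s, |C s| ≤ C₀) →
      (∀ s ∈ Ici (s₀ + 1), HasDerivAt θ₁
        (-(Θ / (s - s₀)) * θ₁ s - 2 * Sg / (s - s₀) * σ₁ s) s) →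
      (∀ s ∈ Ici (s₀ + 1), HasDerivAt σ₁
        (-(Sg / (s - s₀)) * θ₁ s - Θ / (s - s₀) * σ₁ s + C s) s) →
      θ₁ (s₀ + 1) = 0 → σ₁ (s₀ + 1) = 0 →
      ∀ s ∈ Ici (s₀ + 1), |θ₁ s| + |σ₁ s| ≤ K * C₀ * (s - s₀) := by
  refine ⟨4, four_pos, fun θ₁ σ₁ C C₀ hC hθ hσ hθ₀ hσ₀ s hs => ?_⟩
  have hs' : s₀ + 1 ≤ s := hs
  have hsa : s₀ < s₀ + 1 := lt_add_one s₀
  have hC' : ∀ t ∈ Ici (s₀ + 1), |C t| ≤ C₀ := fun t _ => hC t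
  have hC₀ : 0 ≤ C₀ := (abs_nonneg _).trans (hC s)
  have hgrowth : 0 ≤ C₀ * (s - (s₀ + 1)) := mul_nonneg hC₀ (sub_nonneg.2 hs')
  suffices |θ₁ s| + |σ₁ s| ≤ 4 * C₀ * (s - (s₀ + 1)) by nlinarith
  rcases powerLaw_background_cases hbg with ⟨hΘ, hSg⟩ | ⟨hΘ, hSg⟩ | ⟨hΘ, hSg⟩
  · linarith [abs_add_abs_le_of_shear_eq_zero 0 (by simp [hΘ]) hSg hsa hC' hθ hσ hθ₀ hσ₀ hs']
  · linarith [abs_add_abs_le_of_shear_eq_zero 2 (by simp [hΘ]) hSg hsa hC' hθ hσ hθ₀ hσ₀ hs']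
  · exact abs_add_abs_le_of_expansion_eq_one hΘ hSg hsa hC' hθ hσ hθ₀ hσ₀ hs'
end

section
/- Let θ, σ : [s₀, s₁) → ℝ solve θ' = -θ²/2 - σ² - r(s), σ' = -θσ + c(s), where r(s) ≥ 0, and suppose there exists s* and ε > 0 with σ(s)² ≥ ε for all s ≥ s*. Then θ cannot remain nonnegative for all s ≥ s*: there exists s' ≥ s* with θ(s') < 0. Consequently (by the focusing lemma) θ → -∞ within finite further parameter distance 2/|θ(s')|. -/
open Set

/-! Along `s ≥ s*` the Raychaudhuri equation gives `θ' ≤ -σ² ≤ -ε`, so `θ` decreases at least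
linearly and must turn negative by the time `s* + (max θ(s*) 0 + 1) / ε`. -/

theorem sub_le_mul_sub_of_hasDerivAt_le_Ici {f f' : ℝ → ℝ} {a C : ℝ}
    (hf : ∀ x ∈ Ici a, HasDerivAt f (f' x) x) (hle : ∀ x ∈ Ici a, f' x ≤ C)
    {x : ℝ} (hx : a ≤ x) : f x - f a ≤ C * (x - a) := by
  have hint : ∀ y ∈ interior (Ici a), a ≤ y := fun y hy => by
    rw [interior_Ici] at hy
    exact le_of_lt hy
  refine (convex_Ici a).image_sub_le_mul_sub_of_deriv_le
    (fun y hy => (hf y hy).continuousAt.continuousWithinAt)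
    (fun y hy => (hf y (hint y hy)).differentiableAt.differentiableWithinAt)
    (fun y hy => ?_) a self_mem_Ici x hx hx
  rw [(hf y (hint y hy)).deriv]
  exact hle y (hint y hy)

theorem exists_neg_of_hasDerivAt_le_neg {f f' : ℝ → ℝ} {a ε : ℝ}
    (hf : ∀ x ∈ Ici a, HasDerivAt f (f' x) x) (hε : 0 < ε) (hle : ∀ x ∈ Ici a, f' x ≤ -ε) :
    ∃ x ∈ Ici a, f x < 0 := by
  set t := (max (f a) 0 + 1) / ε
  have ht : 0 ≤ t := by positivity
  have hεt : ε * t = max (f a) 0 + 1 := mul_div_cancel₀ _ hε.ne'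
  refine ⟨a + t, le_add_of_nonneg_right ht, ?_⟩
  have hdecay := sub_le_mul_sub_of_hasDerivAt_le_Ici hf hle (le_add_of_nonneg_right ht)
  rw [add_sub_cancel_left, neg_mul, hεt] at hdecay
  linarith [le_max_left (f a) 0]

theorem stmt_16_general (θ σ r : ℝ → ℝ) (s₀ sstar ε : ℝ) (hs : s₀ ≤ sstar) (hε : 0 < ε)
    (hθ : ∀ s ∈ Ici s₀, HasDerivAt θ (-(θ s) ^ 2 / 2 - (σ s) ^ 2 - r s) s)
    (hr : ∀ s, 0 ≤ r s)
    (hshear : ∀ s ∈ Ici sstar, ε ≤ (σ s) ^ 2) :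
    ∃ s' ∈ Ici sstar, θ s' < 0 :=
  exists_neg_of_hasDerivAt_le_neg (fun s hs' => hθ s (hs.trans hs')) hε fun s hs' => by
    nlinarith [sq_nonneg (θ s), hr s, hshear s hs']

/-- Shear-driven focusing: if `θ' = -θ²/2 - σ² - r` and `σ' = -θσ + c` with
`r ≥ 0`, and `σ² ≥ ε > 0` from some parameter `s*` on, then `θ` cannot remain
nonnegative for all `s ≥ s*`: there is `s' ≥ s*` with `θ(s') < 0` (after which,
by the focusing lemma, `θ → -∞` within parameter distance `2/|θ(s')|`). -/
theorem stmt_16 (θ σ r c : ℝ → ℝ) (s₀ sstar ε : ℝ) (hs : s₀ ≤ sstar) (hε : 0 < ε)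
    (hθ : ∀ s ∈ Ici s₀, HasDerivAt θ (-(θ s) ^ 2 / 2 - (σ s) ^ 2 - r s) s)
    (hσ : ∀ s ∈ Ici s₀, HasDerivAt σ (-(θ s) * σ s + c s) s)
    (hr : ∀ s, 0 ≤ r s)
    (hshear : ∀ s ∈ Ici sstar, ε ≤ (σ s) ^ 2) :
    ∃ s' ∈ Ici sstar, θ s' < 0 :=
  stmt_16_general θ σ r s₀ sstar ε hs hε hθ hr hshear
end

section
/- Let A : ℝ → M₂(ℝ) be continuous with ‖A(s)‖ ≤ C₀ < 1 for all s, and consider the matrix Riccati-type system on 2×2 symmetric trace-free matrices: Θ' = -Θ²/2 - Tr(S²), S' = -ΘS + A(s), with initial data Θ(0) = Θ₀ > 0, S(0) = 0. Then the solution exists and Θ(s) > 0 on [0, T] whenever T ≤ c·min(Θ₀, Θ₀⁻¹, C₀^{-1/2}) for a universal constant c > 0. -/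
/-!
As long as `Θ` stays in the window `(Θ₀/2, 3Θ₀/2)` it is positive, so each entry of `S`, whose
equation is `S' = -ΘS + A` with `S(0) = 0`, is fenced in by `±2C₀s`. Then `|Θ'|` is bounded by
`L = 9Θ₀²/8 + 16C₀²T²`, and the smallness of `T` gives `LT < Θ₀/2`: `Θ` cannot reach the edge of
the window before time `T`.
-/

open Set

theorem ContinuousOn.exists_first_mem {f : ℝ → ℝ} {a b x : ℝ} {s : Set ℝ}
    (hf : ContinuousOn f (Icc a b)) (hs : IsClosed s) (hx : x ∈ Icc a b) (hfx : f x ∈ s) :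
    ∃ t ∈ Icc a x, f t ∈ s ∧ ∀ u ∈ Ico a t, f u ∉ s := by
  set E := Icc a x ∩ f ⁻¹' s
  have hE : IsClosed E :=
    (hf.mono (Icc_subset_Icc_right hx.2)).preimage_isClosed_of_isClosed isClosed_Icc hs
  have hEne : E.Nonempty := ⟨x, right_mem_Icc.2 hx.1, hfx⟩
  have hEbdd : BddBelow E := bddBelow_Icc.mono inter_subset_left
  obtain ⟨htx, hft⟩ := hE.csInf_mem hEne hEbdd
  refine ⟨sInf E, htx, hft, fun u hu hfu => hu.2.not_ge (csInf_le hEbdd ⟨?_, hfu⟩)⟩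
  exact ⟨hu.1, hu.2.le.trans htx.2⟩

theorem le_of_hasDerivWithinAt_neg_mul_add {f θ g : ℝ → ℝ} {a b C : ℝ} (hC : 0 < C)
    (hf : ∀ x ∈ Icc a b, HasDerivWithinAt f (-θ x * f x + g x) (Icc a b) x)
    (hθ : ∀ x ∈ Ico a b, 0 ≤ θ x) (hg : ∀ x ∈ Ico a b, g x ≤ C) (ha : f a ≤ 0) :
    ∀ x ∈ Icc a b, f x ≤ 2 * C * (x - a) := by
  have hB : ∀ x, HasDerivAt (fun x => 2 * C * (x - a)) (2 * C) x := fun x => by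
    simpa using ((hasDerivAt_id x).sub_const a).const_mul (2 * C)
  refine image_le_of_deriv_right_lt_deriv_boundary (fun x hx => (hf x hx).continuousWithinAt)
    (fun x hx => (hf x (Ico_subset_Icc_self hx)).mono_of_mem_nhdsWithin
      (Icc_mem_nhdsGE_of_mem hx)) (by simpa using ha) hB fun x hx hfx => ?_
  -- at a contact point `f x ≥ 0`, so the damping term `-θ f` only pushes `f` down
  have hfx_nonneg : 0 ≤ f x := by rw [hfx]; nlinarith [hx.1]
  nlinarith [hg x hx, hθ x hx]

theorem abs_le_of_hasDerivWithinAt_neg_mul_add {f θ g : ℝ → ℝ} {a b C : ℝ} (hC : 0 < C)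
    (hf : ∀ x ∈ Icc a b, HasDerivWithinAt f (-θ x * f x + g x) (Icc a b) x)
    (hθ : ∀ x ∈ Ico a b, 0 ≤ θ x) (hg : ∀ x ∈ Ico a b, |g x| ≤ C) (ha : f a = 0) :
    ∀ x ∈ Icc a b, |f x| ≤ 2 * C * (x - a) := by
  have hneg : ∀ x ∈ Icc a b, HasDerivWithinAt (-f) (-θ x * (-f) x + -g x) (Icc a b) x :=
    fun x hx => (hf x hx).neg.congr_deriv (by simp only [Pi.neg_apply]; ring)
  intro x hx
  refine abs_le.2 ⟨?_, ?_⟩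
  · have := le_of_hasDerivWithinAt_neg_mul_add hC hneg hθ
      (fun x hx => (neg_le_abs (g x)).trans (hg x hx)) (by simp [ha]) x hx
    simp only [Pi.neg_apply] at this
    linarith
  · exact le_of_hasDerivWithinAt_neg_mul_add hC hf hθ
      (fun x hx => (le_abs_self (g x)).trans (hg x hx)) ha.le x hx

theorem abs_sum_sum_mul_swap_le {n : Type*} [Fintype n] {M : n → n → ℝ} {K : ℝ}
    (hM : ∀ i j, |M i j| ≤ K) : |∑ i, ∑ j, M i j * M j i| ≤ (Fintype.card n * K) ^ 2 := by
  calc |∑ i, ∑ j, M i j * M j i| ≤ ∑ i, ∑ j, |M i j * M j i| :=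
        (Finset.abs_sum_le_sum_abs _ _).trans (Finset.sum_le_sum fun i _ =>
          Finset.abs_sum_le_sum_abs _ _)
    _ ≤ ∑ _i : n, ∑ _j : n, K ^ 2 := by
        gcongr with i _ j _
        rw [abs_mul, sq]
        exact mul_le_mul (hM i j) (hM j i) (abs_nonneg _) ((abs_nonneg _).trans (hM i j))
    _ = (Fintype.card n * K) ^ 2 := by
        simp only [Finset.sum_const, Finset.card_univ, nsmul_eq_mul]
        ring

theorem abs_sub_lt_of_deviation_system {n : Type*} [Fintype n] {Θ : ℝ → ℝ}
    {S A : ℝ → n → n → ℝ} {Θ₀ C₀ T : ℝ} (hC₀ : 0 < C₀) (hA : ∀ s i j, |A s i j| ≤ C₀)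
    (hΘ' : ∀ s ∈ Icc (0 : ℝ) T, HasDerivWithinAt Θ
      (-(Θ s) ^ 2 / 2 - ∑ i, ∑ j, S s i j * S s j i) (Icc (0 : ℝ) T) s)
    (hS' : ∀ i j, ∀ s ∈ Icc (0 : ℝ) T, HasDerivWithinAt (fun u => S u i j)
      (-(Θ s) * S s i j + A s i j) (Icc (0 : ℝ) T) s)
    (hΘ0 : Θ 0 = Θ₀) (hS0 : ∀ i j, S 0 i j = 0)
    (hT : (9 / 8 * Θ₀ ^ 2 + (Fintype.card n * (2 * C₀ * T)) ^ 2) * T < Θ₀ / 2) :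
    ∀ s ∈ Icc (0 : ℝ) T, |Θ s - Θ₀| < Θ₀ / 2 := by
  by_contra! ⟨s₀, hs₀, hexit⟩
  have hclosed : IsClosed {y : ℝ | Θ₀ / 2 ≤ |y - Θ₀|} :=
    isClosed_le continuous_const (continuous_abs.comp (continuous_sub_right _))
  obtain ⟨t, ht, hexit_t, hinside⟩ := ContinuousOn.exists_first_mem
    (fun s hs => (hΘ' s hs).continuousWithinAt) hclosed hs₀ hexit
  simp only [mem_ofPred_eq, not_le] at hexit_t hinside
  have hsub : Icc 0 t ⊆ Icc 0 T := Icc_subset_Icc_right (ht.2.trans hs₀.2)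
  have hS_bound : ∀ u ∈ Icc 0 t, ∀ i j, |S u i j| ≤ 2 * C₀ * T := fun u hu i j => by
    have := abs_le_of_hasDerivWithinAt_neg_mul_add hC₀
      (fun s hs => (hS' i j s (hsub hs)).mono hsub)
      (fun s hs => by linarith [abs_lt.1 (hinside s hs)]) (fun s _ => hA s i j) (hS0 i j) u hu
    nlinarith [(hsub hu).2]
  have hΘ'_bound : ∀ u ∈ Ico 0 t, ‖-(Θ u) ^ 2 / 2 - ∑ i, ∑ j, S u i j * S u j i‖ ≤
      9 / 8 * Θ₀ ^ 2 + (Fintype.card n * (2 * C₀ * T)) ^ 2 := fun u hu => by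
    have htr := abs_le.1 (abs_sum_sum_mul_swap_le (hS_bound u (Ico_subset_Icc_self hu)))
    obtain ⟨hlo, hhi⟩ := abs_lt.1 (hinside u hu)
    have hsq : Θ u ^ 2 ≤ 9 / 4 * Θ₀ ^ 2 := by nlinarith
    rw [Real.norm_eq_abs, abs_le]
    constructor <;> linarith [sq_nonneg (Θ u)]
  have hdrift := norm_image_sub_le_of_norm_deriv_le_segment'
    (fun s hs => (hΘ' s (hsub hs)).mono hsub) hΘ'_bound t (right_mem_Icc.2 ht.1)
  rw [Real.norm_eq_abs, hΘ0, sub_zero] at hdrift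
  nlinarith [(hsub (right_mem_Icc.2 ht.1)).2]

theorem deviation_time_bound {Θ₀ C₀ T : ℝ} (hΘ₀ : 0 < Θ₀) (hC₀ : 0 < C₀) (hC₀1 : C₀ < 1)
    (hT0 : 0 ≤ T) (hT : T ≤ 1 / 10 * min (min Θ₀ Θ₀⁻¹) (√C₀)⁻¹) :
    (9 / 8 * Θ₀ ^ 2 + (2 * (2 * C₀ * T)) ^ 2) * T < Θ₀ / 2 := by
  have hT_Θ₀ : T ≤ Θ₀ / 10 := by
    linarith [min_le_left (min Θ₀ Θ₀⁻¹) (√C₀)⁻¹, min_le_left Θ₀ Θ₀⁻¹]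
  have hΘ₀T : Θ₀ * T ≤ 1 / 10 := by
    rw [mul_comm, ← le_div_iff₀ hΘ₀, div_eq_mul_inv]
    linarith [min_le_left (min Θ₀ Θ₀⁻¹) (√C₀)⁻¹, min_le_right Θ₀ Θ₀⁻¹]
  have hsqrtT : √C₀ * T ≤ 1 / 10 := by
    rw [mul_comm, ← le_div_iff₀ (Real.sqrt_pos.2 hC₀), div_eq_mul_inv]
    linarith [min_le_right (min Θ₀ Θ₀⁻¹) (√C₀)⁻¹]
  have hC₀T : C₀ * T ^ 2 ≤ 1 / 100 := by
    have := Real.sq_sqrt hC₀.le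
    nlinarith [mul_nonneg (Real.sqrt_nonneg C₀) hT0]
  nlinarith [mul_le_mul hC₀1.le hC₀T (by positivity) zero_le_one]

/-- Matrix form of the perturbed deviation equation: for the system
`Θ' = -Θ²/2 - Tr(S²)`, `S' = -ΘS + A(s)` on 2×2 symmetric trace-free matrices
with `A` continuous, symmetric, trace-free and entrywise bounded by `C₀ < 1`,
and data `Θ(0) = Θ₀ > 0`, `S(0) = 0`, the expansion stays positive on `[0,T]`
whenever `T ≤ c·min(Θ₀, Θ₀⁻¹, C₀^{-1/2})` for a universal constant `c > 0`. -/
theorem stmt_19 :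
    ∃ c : ℝ, 0 < c ∧
      ∀ (Θ : ℝ → ℝ) (S A : ℝ → Fin 2 → Fin 2 → ℝ) (Θ₀ C₀ T : ℝ),
        0 < Θ₀ → 0 < C₀ → C₀ < 1 →
        Continuous A →
        (∀ s i j, |A s i j| ≤ C₀) →
        (∀ s i j, A s i j = A s j i) →
        (∀ s, A s 0 0 + A s 1 1 = 0) →
        (∀ s ∈ Icc (0 : ℝ) T, HasDerivWithinAt Θ
          (-(Θ s) ^ 2 / 2 - ∑ i, ∑ j, S s i j * S s j i) (Icc (0 : ℝ) T) s) →
        (∀ i j, ∀ s ∈ Icc (0 : ℝ) T, HasDerivWithinAt (fun u => S u i j)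
          (-(Θ s) * S s i j + A s i j) (Icc (0 : ℝ) T) s) →
        Θ 0 = Θ₀ → (∀ i j, S 0 i j = 0) →
        0 ≤ T → T ≤ c * min (min Θ₀ Θ₀⁻¹) (Real.sqrt C₀)⁻¹ →
        ∀ s ∈ Icc (0 : ℝ) T, 0 < Θ s := by
  refine ⟨1 / 10, by norm_num, ?_⟩
  intro Θ S A Θ₀ C₀ T hΘ₀ hC₀ hC₀1 _ hA _ _ hΘ' hS' hΘ0 hS0 hT0 hT s hs
  have hsmall := deviation_time_bound hΘ₀ hC₀ hC₀1 hT0 hT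
  have := abs_lt.1 (abs_sub_lt_of_deviation_system hC₀ hA hΘ' hS' hΘ0 hS0
    (by simpa using hsmall) s hs)
  linarith
end
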